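/- Let n ≥ 1 be an integer, M > 1, 0 < a' < b', s > 1, M₁ > 2(1 + M) and ε₁ ∈ (0, π/10). For h ∈ (0, 1], define V₊(h) as the set of pairs (k, k') with k = ℓ + n/2, k' = ℓ' + n/2 for some ℓ, ℓ' ∈ ℕ, such that k < k', a'/h² ≤ k k' ≤ b'/h², and 1/M ≤ k/k' ≤ M. Then there exist ε₀ ∈ (0, 1) and γ > 0, depending only on n, M, a', b', s, M₁ and ε₁, such that for every h ∈ (0, ε₀], every t ∈ [h², h^s], every ω ∈ [0, 2π), and every θ̃ ∈ ℝ with 0 < |θ̃| ≤ ε₁ satisfying, for every (k, k') ∈ V₊(h) with N = k + k', both N|θ̃| ≥ 1 and (|θ̃| < tN/M₁ or |θ̃| > M₁ N t), at least one of the following holds: (III) dist((tk + ω + θ̃)/(2π), ℤ) ≥ γ t k for all (k, k') ∈ V₊(h); (IV) dist((tk' − ω + θ̃)/(2π), ℤ) ≥ γ t k' for all (k, k') ∈ V₊(h). -/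
import Mathlib


/-- Membership in the index set `V₊(h)`: `(k,k') = (ℓ + n/2, ℓ' + n/2)` for some
`ℓ, ℓ' ∈ ℕ`, with `k < k'`, `a'/h² ≤ kk' ≤ b'/h²` and `1/M ≤ k/k' ≤ M`. -/
def memVplus (n : ℕ) (M a' b' h k k' : ℝ) : Prop :=
  (∃ ℓ : ℕ, k = (ℓ : ℝ) + (n : ℝ) / 2) ∧ (∃ ℓ' : ℕ, k' = (ℓ' : ℝ) + (n : ℝ) / 2) ∧
    k < k' ∧ a' / h ^ 2 ≤ k * k' ∧ k * k' ≤ b' / h ^ 2 ∧ 1 / M ≤ k / k' ∧ k / k' ≤ M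

lemma vplus_bounds {n : ℕ} {M a' b' h k k' : ℝ} (hn : 1 ≤ n) (hM : 1 < M)
    (ha' : 0 < a') (hh : 0 < h) (hmem : memVplus n M a' b' h k k') :
    0 < k ∧ k < k' ∧ Real.sqrt (a' / M) / h ≤ k ∧ k' ≤ Real.sqrt (M * b') / h ∧
      k' ≤ M * k := by
  obtain ⟨⟨ℓ, hk⟩, ⟨ℓ', hk'⟩, hlt, hlo, hhi, hr1, hr2⟩ := hmem
  have hM0 : (0:ℝ) < M := lt_trans one_pos hM
  have hn1 : (1:ℝ) ≤ (n:ℝ) := by exact_mod_cast hn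
  have hk0 : 0 < k := by
    have := Nat.cast_nonneg (α := ℝ) ℓ
    rw [hk]; linarith
  have hk'0 : 0 < k' := hk0.trans hlt
  have h2 : (0:ℝ) < h ^ 2 := pow_pos hh 2
  rw [div_le_iff₀ h2] at hlo
  rw [le_div_iff₀ h2] at hhi
  have hkM : k' ≤ M * k := by
    rw [div_le_div_iff₀ hM0 hk'0] at hr1
    linarith
  have hupper : k' ≤ Real.sqrt (M * b') / h := by
    have e1 : (k' * h) ^ 2 ≤ M * b' := by nlinarith
    have e2 : k' * h ≤ Real.sqrt (M * b') := by
      calc k' * h = Real.sqrt ((k' * h) ^ 2) := (Real.sqrt_sq (by positivity)).symm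
        _ ≤ Real.sqrt (M * b') := Real.sqrt_le_sqrt e1
    rwa [le_div_iff₀ hh]
  have hlower : Real.sqrt (a' / M) / h ≤ k := by
    have e1 : a' / M ≤ (k * h) ^ 2 := by
      rw [div_le_iff₀ hM0]; nlinarith
    have e2 : Real.sqrt (a' / M) ≤ k * h := by
      calc Real.sqrt (a' / M) ≤ Real.sqrt ((k * h) ^ 2) := Real.sqrt_le_sqrt e1
        _ = k * h := Real.sqrt_sq (by positivity)
    rwa [div_le_iff₀ hh]
  exact ⟨hk0, hlt, hlower, hupper, hkM⟩


private lemma aux_caseB1 {M M₁ cm t k p p' q θ : ℝ} (hM : 1 < M) (hM₁0 : 0 < M₁)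
    (hβ : cm * M₁ ≤ M₁ - 2 * (1 + M)) (hcm0 : 0 < cm) (ht0 : 0 < t) (hk0 : 0 < k)
    (hp0 : 0 < p) (hplt : p < p') (hq : q ≤ p')
    (hdp1 : -θ * M₁ < t * (p + p')) :
    cm * (q * t) ≤ t * (k + p') + 2 * θ := by
  have hp'0 : 0 < p' := hp0.trans hplt
  have A3 : (M₁ - 2 * (1 + M)) * (t * p') ≤ (t * (k + p') + 2 * θ) * M₁ := by
    nlinarith [mul_pos ht0 (sub_pos.2 hplt), mul_pos (mul_pos ht0 hk0) hM₁0,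
      mul_nonneg (mul_pos ht0 hp'0).le (by linarith : (0:ℝ) ≤ M - 1),
      mul_pos ht0 hp0]
  have A2 : cm * (p' * t) * M₁ ≤ (M₁ - 2 * (1 + M)) * (t * p') := by
    nlinarith [mul_le_mul_of_nonneg_right hβ (mul_pos ht0 hp'0).le]
  have A5 := le_of_mul_le_mul_right (le_trans A2 A3) hM₁0
  nlinarith [mul_le_mul_of_nonneg_left (mul_le_mul_of_nonneg_right hq ht0.le) hcm0.le]

private lemma aux_caseB2 {M M₁ cm t k k' p' q θ : ℝ} (hM : 1 < M) (hM₁0 : 0 < M₁)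
    (hβ : cm * M₁ ≤ M₁ - 2 * (1 + M)) (hcm0 : 0 < cm) (ht0 : 0 < t) (hk0 : 0 < k)
    (hp'0 : 0 < p') (hkM : k' ≤ M * k) (hq : q ≤ k)
    (hdk1 : -θ * M₁ < t * (k + k')) :
    cm * (q * t) ≤ t * (k + p') + 2 * θ := by
  have B3 : (M₁ - 2 * (1 + M)) * (t * k) ≤ (t * (k + p') + 2 * θ) * M₁ := by
    nlinarith [mul_le_mul_of_nonneg_left hkM ht0.le,
      mul_pos (mul_pos ht0 hp'0) hM₁0, mul_pos ht0 hk0]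
  have B2 : cm * (k * t) * M₁ ≤ (M₁ - 2 * (1 + M)) * (t * k) := by
    nlinarith [mul_le_mul_of_nonneg_right hβ (mul_pos ht0 hk0).le]
  have B5 := le_of_mul_le_mul_right (le_trans B2 B3) hM₁0
  nlinarith [mul_le_mul_of_nonneg_left (mul_le_mul_of_nonneg_right hq ht0.le) hcm0.le]

private lemma aux_caseA {M₁ cm t k k' p p' q θ : ℝ} (hM₁4 : 4 < M₁)
    (hcm0 : 0 < cm) (hcm1 : cm ≤ 1) (ht0 : 0 < t) (hk0 : 0 < k) (hk'0 : 0 < k')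
    (hp0 : 0 < p) (hp'0 : 0 < p') (hq : q ≤ p')
    (hdk2 : M₁ * (k + k') * t < -θ) (hdp2 : M₁ * (p + p') * t < -θ) :
    cm * (q * t) ≤ -(t * (k + p') + 2 * θ) := by
  nlinarith [mul_le_mul_of_nonneg_left (mul_le_mul_of_nonneg_right hq ht0.le) hcm0.le,
    mul_nonneg (mul_pos ht0 hk0).le (by linarith : (0:ℝ) ≤ M₁ - 1),
    mul_nonneg (mul_pos ht0 hp'0).le (by linarith : (0:ℝ) ≤ M₁ - 2),
    mul_nonneg (mul_pos ht0 hp'0).le (by linarith : (0:ℝ) ≤ 1 - cm),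
    mul_nonneg (mul_pos ht0 hk'0).le (by linarith : (0:ℝ) ≤ M₁),
    mul_nonneg (mul_pos ht0 hp0).le (by linarith : (0:ℝ) ≤ M₁)]

private lemma aux_casePos {cm t k p' q θ : ℝ}
    (hcm0 : 0 < cm) (hcm1 : cm ≤ 1) (ht0 : 0 < t) (hk0 : 0 < k)
    (hp'0 : 0 < p') (hq : q ≤ p') (hpos : 0 < θ) :
    cm * (q * t) ≤ t * (k + p') + 2 * θ := by
  nlinarith [mul_le_mul_of_nonneg_left (mul_le_mul_of_nonneg_right hq ht0.le) hcm0.le,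
    mul_nonneg (mul_pos ht0 hp'0).le (by linarith : (0:ℝ) ≤ 1 - cm),
    mul_pos ht0 hk0]

/-- Dichotomy for the Bessel-shifted phase: there exist `ε₀ ∈ (0,1)` and `γ > 0` such that
for all `h ∈ (0,ε₀]`, `t ∈ [h², h^s]`, `ω ∈ [0,2π)` and `θ̃` with `0 < |θ̃| ≤ ε₁` satisfying,
for every `(k,k') ∈ V₊(h)` with `N = k+k'`, both `N|θ̃| ≥ 1` and (`|θ̃| < tN/M₁` or
`|θ̃| > M₁Nt`), either `dist((tk+ω+θ̃)/2π, ℤ) ≥ γtk` for all `(k,k') ∈ V₊(h)`, or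
`dist((tk'−ω+θ̃)/2π, ℤ) ≥ γtk'` for all `(k,k') ∈ V₊(h)`. -/
theorem shifted_phase_dichotomy (n : ℕ) (hn : 1 ≤ n) (M a' b' s M₁ ε₁ : ℝ)
    (hM : 1 < M) (ha' : 0 < a') (hab : a' < b') (hs : 1 < s)
    (hM₁ : 2 * (1 + M) < M₁) (hε₁ : ε₁ ∈ Set.Ioo (0 : ℝ) (Real.pi / 10)) :
    ∃ ε₀ ∈ Set.Ioo (0 : ℝ) 1, ∃ γ : ℝ, 0 < γ ∧
      ∀ h ∈ Set.Ioc (0 : ℝ) ε₀, ∀ t ∈ Set.Icc (h ^ 2) (h ^ s),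
        ∀ ω ∈ Set.Ico (0 : ℝ) (2 * Real.pi), ∀ θ : ℝ, 0 < |θ| → |θ| ≤ ε₁ →
          (∀ k k' : ℝ, memVplus n M a' b' h k k' →
            1 ≤ (k + k') * |θ| ∧
              (|θ| < t * (k + k') / M₁ ∨ M₁ * (k + k') * t < |θ|)) →
          ((∀ k k' : ℝ, memVplus n M a' b' h k k' →
              ∀ m : ℤ, γ * t * k ≤ |(t * k + ω + θ) / (2 * Real.pi) - m|) ∨
           (∀ k k' : ℝ, memVplus n M a' b' h k k' →
              ∀ m : ℤ, γ * t * k' ≤ |(t * k' - ω + θ) / (2 * Real.pi) - m|)) := by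

  obtain ⟨hε₁0, hε₁π⟩ := hε₁
  have hπ : (0:ℝ) < Real.pi := Real.pi_pos
  have hM0 : (0:ℝ) < M := lt_trans one_pos hM
  have hM₁0 : (0:ℝ) < M₁ := by linarith
  have hb' : 0 < b' := ha'.trans hab
  obtain ⟨Khi, hKhidef⟩ : ∃ x : ℝ, x = Real.sqrt (M * b') := ⟨_, rfl⟩
  obtain ⟨Klo, hKlodef⟩ : ∃ x : ℝ, x = Real.sqrt (a' / M) := ⟨_, rfl⟩
  have hKhi0 : 0 < Khi := by rw [hKhidef]; exact Real.sqrt_pos.2 (by positivity)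
  have hKlo0 : 0 < Klo := by rw [hKlodef]; exact Real.sqrt_pos.2 (by positivity)
  obtain ⟨cm, hcmdef⟩ : ∃ x : ℝ, x = min ((M - 1) / (M + 1)) (1 - 2 * (1 + M) / M₁) := ⟨_, rfl⟩
  have hcm0 : 0 < cm := by
    rw [hcmdef]
    apply lt_min
    · exact div_pos (by linarith) (by linarith)
    · have : 2 * (1 + M) / M₁ < 1 := (div_lt_one hM₁0).2 hM₁
      linarith
  have hcm1 : cm ≤ 1 := by
    rw [hcmdef]
    refine le_trans (min_le_left _ _) ?_
    rw [div_le_one (by linarith)]; linarith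
  have hβ : cm * M₁ ≤ M₁ - 2 * (1 + M) := by
    have h1 : cm ≤ 1 - 2 * (1 + M) / M₁ := hcmdef ▸ min_le_right _ _
    have h2 : 2 * (1 + M) / M₁ * M₁ = 2 * (1 + M) := div_mul_cancel₀ _ (ne_of_gt hM₁0)
    nlinarith
  obtain ⟨γ, hγdef⟩ : ∃ x : ℝ, x = Klo * cm / (4 * Real.pi * Khi) := ⟨_, rfl⟩
  have hγ0 : 0 < γ := by rw [hγdef]; positivity
  obtain ⟨ε₀, hε₀def⟩ :
      ∃ x : ℝ, x = min (1/2 : ℝ) ((Real.pi / (4 * Khi)) ^ (1 / (s - 1))) := ⟨_, rfl⟩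
  have hX0 : (0:ℝ) < (Real.pi / (4 * Khi)) ^ (1 / (s - 1)) :=
    Real.rpow_pos_of_pos (by positivity) _
  have hε₀0 : 0 < ε₀ := by rw [hε₀def]; exact lt_min (by norm_num) hX0
  have hε₀1 : ε₀ < 1 := by
    rw [hε₀def]; exact lt_of_le_of_lt (min_le_left _ _) (by norm_num)
  refine ⟨ε₀, ⟨hε₀0, hε₀1⟩, γ, hγ0, ?_⟩
  intro h hh t ht ω hω θ hθ0 hθε hdich
  have hh0 : 0 < h := hh.1
  have ht0 : 0 < t := lt_of_lt_of_le (pow_pos hh0 2) ht.1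
  have hpow : t / h ≤ Real.pi / (4 * Khi) := by
    have e0 : h ^ s = h ^ (s - 1) * h := by
      rw [← Real.rpow_add_one (ne_of_gt hh0)]; norm_num
    have e1 : h ^ (s - 1) ≤ ε₀ ^ (s - 1) := Real.rpow_le_rpow hh0.le hh.2 (by linarith)
    have e2 : ε₀ ^ (s - 1) ≤ ((Real.pi / (4 * Khi)) ^ (1 / (s - 1))) ^ (s - 1) :=
      Real.rpow_le_rpow hε₀0.le (hε₀def ▸ min_le_right _ _) (by linarith)
    have e3 : ((Real.pi / (4 * Khi)) ^ (1 / (s - 1))) ^ (s - 1) = Real.pi / (4 * Khi) := by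
      rw [← Real.rpow_mul (by positivity), one_div,
        inv_mul_cancel₀ (by intro hc; apply absurd hc; intro hc'; linarith [sub_eq_zero.1 hc'] : s - 1 ≠ 0), Real.rpow_one]
    rw [div_le_iff₀ hh0]
    calc t ≤ h ^ s := ht.2
      _ = h ^ (s - 1) * h := e0
      _ ≤ (Real.pi / (4 * Khi)) * h := by
          apply mul_le_mul_of_nonneg_right _ hh0.le
          exact le_trans e1 (le_trans e2 (le_of_eq e3))
  by_cases hIII : ∀ k k' : ℝ, memVplus n M a' b' h k k' →
      ∀ m : ℤ, γ * t * k ≤ |(t * k + ω + θ) / (2 * Real.pi) - m|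
  · exact Or.inl hIII
  right
  push_neg at hIII
  obtain ⟨k, k', hkk', m₀, hm₀⟩ := hIII
  intro p p' hpp' m
  obtain ⟨hk0, hklt, hkL, hkU, hkM⟩ := vplus_bounds hn hM ha' hh0 hkk'
  obtain ⟨hp0, hplt, hpL, hpU, hpM⟩ := vplus_bounds hn hM ha' hh0 hpp'
  simp only [← hKhidef, ← hKlodef] at hkL hkU hpL hpU
  obtain ⟨q, hqdef⟩ : ∃ x : ℝ, x = Klo / h := ⟨_, rfl⟩
  have hq0 : 0 < q := by rw [hqdef]; positivity
  rw [← hqdef] at hkL hpL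
  have hk'0 : 0 < k' := hk0.trans hklt
  have hp'0 : 0 < p' := hp0.trans hplt
  have hkU' : k ≤ Khi / h := le_trans hklt.le hkU
  have hpL' : q ≤ p' := le_trans hpL hplt.le
  obtain ⟨-, hdk⟩ := hdich k k' hkk'
  obtain ⟨-, hdp⟩ := hdich p p' hpp'
  obtain ⟨S, hSdef⟩ : ∃ x : ℝ, x = t * (k + p') + 2 * θ := ⟨_, rfl⟩
  have hθne : θ ≠ 0 := abs_pos.1 hθ0
  -- Claim 2 : cm * (q * t) ≤ |S|
  have hM₁4 : (4:ℝ) < M₁ := by linarith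
  have hS2 : cm * (q * t) ≤ |S| := by
    rcases lt_or_gt_of_ne hθne with hneg | hpos
    · have habs : |θ| = -θ := abs_of_neg hneg
      rcases hdp with hdp1 | hdp2
      · rw [habs, lt_div_iff₀ hM₁0] at hdp1
        have hgoal := aux_caseB1 hM hM₁0 hβ hcm0 ht0 hk0 hp0 hplt hpL' hdp1
        rw [← hSdef] at hgoal
        exact le_trans hgoal (le_abs_self S)
      · rw [habs] at hdp2
        rcases hdk with hdk1 | hdk2
        · rw [habs, lt_div_iff₀ hM₁0] at hdk1
          have hgoal := aux_caseB2 hM hM₁0 hβ hcm0 ht0 hk0 hp'0 hkM hkL hdk1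
          rw [← hSdef] at hgoal
          exact le_trans hgoal (le_abs_self S)
        · rw [habs] at hdk2
          have hgoal := aux_caseA hM₁4 hcm0 hcm1 ht0 hk0 hk'0 hp0 hp'0 hpL' hdk2 hdp2
          rw [← hSdef] at hgoal
          linarith only [hgoal, neg_abs_le S]
    · have hgoal := aux_casePos hcm0 hcm1 ht0 hk0 hp'0 hpL' hpos
      rw [← hSdef] at hgoal
      exact le_trans hgoal (le_abs_self S)
  -- Claim 1 : |S| ≤ π
  have hS1 : |S| ≤ Real.pi := by
    have b1 : t * (k + p') ≤ Real.pi / 2 := by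
      calc t * (k + p') ≤ t * (Khi / h + Khi / h) :=
            mul_le_mul_of_nonneg_left (add_le_add hkU' hpU) ht0.le
        _ = 2 * Khi * (t / h) := by ring
        _ ≤ 2 * Khi * (Real.pi / (4 * Khi)) :=
            mul_le_mul_of_nonneg_left hpow (by positivity)
        _ = Real.pi / 2 := by
            field_simp
            ring
    have hS1' : |S| ≤ |t * (k + p')| + |2 * θ| := by rw [hSdef]; exact abs_add_le _ _
    have hSe : |t * (k + p')| + |2 * θ| = t * (k + p') + 2 * |θ| := by
      rw [abs_of_nonneg (by positivity), abs_mul, abs_two]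
    linarith only [hS1', hSe.le, hSe.ge, hθε, hε₁π, b1, hθ0]
  -- Assembly
  have htwopi : (0:ℝ) < 2 * Real.pi := by positivity
  have e2 : (t * k + ω + θ) / (2 * Real.pi) - (m₀:ℝ)
      = (t * k + ω + θ - 2 * Real.pi * m₀) / (2 * Real.pi) := by
    field_simp
  rw [e2, abs_div, abs_of_pos htwopi, div_lt_iff₀ htwopi] at hm₀
  have key : ∀ j : ℤ, |S| ≤ |S - 2 * Real.pi * j| := by
    intro j
    rcases eq_or_ne j 0 with rfl | hj
    · simp
    · have h1 : (1:ℝ) ≤ |(j:ℝ)| := by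
        have : (1:ℤ) ≤ |j| := Int.one_le_abs hj
        exact_mod_cast this
      have h2 : 2 * Real.pi ≤ |2 * Real.pi * j| := by
        rw [abs_mul, abs_of_pos htwopi]
        exact le_mul_of_one_le_right htwopi.le h1
      have h3 : |2 * Real.pi * j| - |S| ≤ |S - 2 * Real.pi * j| := by
        rw [abs_sub_comm]
        exact abs_sub_abs_le_abs_sub _ _
      linarith only [hS1, h2, h3]
  have hbound : ∀ x : ℝ, 0 < x → x ≤ Khi / h →
      2 * Real.pi * (γ * t * x) ≤ cm * (q * t) / 2 := by
    intro x hx hxu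
    have hxh : x * h ≤ Khi := (le_div_iff₀ hh0).1 hxu
    have hqh : q * h = Klo := by rw [hqdef]; field_simp
    have e : 2 * Real.pi * (γ * t * x) = Klo * cm * (t * x) / (2 * Khi) := by
      rw [hγdef]; field_simp; ring
    rw [e, div_le_div_iff₀ (by positivity) (by norm_num : (0:ℝ) < 2)]
    have e6 : Klo * cm * (t * x) * 2 = cm * q * t * (x * h) * 2 := by
      rw [← hqh]; ring
    have hint := mul_le_mul_of_nonneg_left hxh (by positivity : (0:ℝ) ≤ cm * q * t)
    linarith only [hint, e6.le, e6.ge]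
  have e3 : (t * p' - ω + θ) / (2 * Real.pi) - (m:ℝ)
      = (t * p' - ω + θ - 2 * Real.pi * m) / (2 * Real.pi) := by
    field_simp
  rw [e3, abs_div, abs_of_pos htwopi, le_div_iff₀ htwopi]
  have decomp : t * p' - ω + θ - 2 * Real.pi * m
      = (S - 2 * Real.pi * ((m:ℝ) + (m₀:ℝ))) - (t * k + ω + θ - 2 * Real.pi * m₀) := by
    rw [hSdef]; ring
  have h4 : |S - 2 * Real.pi * ((m:ℝ) + (m₀:ℝ))| - |t * k + ω + θ - 2 * Real.pi * m₀|
      ≤ |t * p' - ω + θ - 2 * Real.pi * m| := by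
    rw [decomp]
    exact abs_sub_abs_le_abs_sub _ _
  have h5 : |S| ≤ |S - 2 * Real.pi * ((m:ℝ) + (m₀:ℝ))| := by
    have h5' := key (m + m₀)
    push_cast at h5'
    exact h5'
  have m1 := hbound k hk0 hkU'
  have m2 := hbound p' hp'0 hpU
  linarith only [h4, h5, hS2, hm₀, m1, m2]
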